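/- Let σ be a three-times differentiable function on the open triangle T whose Hessian determinant is identically equal to π², i.e., σ₁₁σ₂₂ - σ₁₂² = π². Then the vector field ρ ↦ (σ₁₂(ρ)/σ₁₁(ρ), (1/2) σ₂₂(ρ)/σ₁₁(ρ)) has vanishing curl on the region where σ₁₁ ≠ 0; equivalently, σ₁₁₁σ₂₂ + σ₁₁σ₁₂₂ = 2σ₁₂σ₁₁₂. -/

import Mathlib

/-!
Differentiating `σ₁₁σ₂₂ - σ₁₂² = π²` in the first variable gives
`σ₁₁₁σ₂₂ + σ₁₁σ₂₂₁ = 2σ₁₂σ₁₂₁`, and since `σ` is `C³` the mixed partials commute: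
`σ₁₂₁ = σ₁₁₂` and `σ₂₂₁ = σ₁₂₂`.
-/

open Real

/-- Partial derivative in the first variable. -/
noncomputable def p1 (f : ℝ → ℝ → ℝ) (x y : ℝ) : ℝ := deriv (fun x' => f x' y) x

/-- Partial derivative in the second variable. -/
noncomputable def p2 (f : ℝ → ℝ → ℝ) (x y : ℝ) : ℝ := deriv (fun y' => f x y') y

/-- The open triangle `T`. -/
def Tri : Set (ℝ × ℝ) := {p | 0 < p.1 ∧ 0 < p.2 ∧ p.1 + p.2 < 1}

open Function Set Filter Topology

section PartialDerivatives

variable {f g : ℝ → ℝ → ℝ} {U : Set (ℝ × ℝ)} {x y : ℝ}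

theorem hasDerivAt_fderiv_fst (hf : DifferentiableAt ℝ (uncurry f) (x, y)) :
    HasDerivAt (fun x' => f x' y) (fderiv ℝ (uncurry f) (x, y) (1, 0)) x :=
  hf.hasFDerivAt.comp_hasDerivAt (f := fun x' => (x', y)) x
    ((hasDerivAt_id x).prodMk (hasDerivAt_const x y))

theorem hasDerivAt_fderiv_snd (hf : DifferentiableAt ℝ (uncurry f) (x, y)) :
    HasDerivAt (fun y' => f x y') (fderiv ℝ (uncurry f) (x, y) (0, 1)) y :=
  hf.hasFDerivAt.comp_hasDerivAt (f := fun y' => (x, y')) y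
    ((hasDerivAt_const y x).prodMk (hasDerivAt_id y))

theorem p1_eq_fderiv (hf : DifferentiableAt ℝ (uncurry f) (x, y)) :
    p1 f x y = fderiv ℝ (uncurry f) (x, y) (1, 0) :=
  (hasDerivAt_fderiv_fst hf).deriv

theorem p2_eq_fderiv (hf : DifferentiableAt ℝ (uncurry f) (x, y)) :
    p2 f x y = fderiv ℝ (uncurry f) (x, y) (0, 1) :=
  (hasDerivAt_fderiv_snd hf).deriv

theorem hasDerivAt_p1 (hf : DifferentiableAt ℝ (uncurry f) (x, y)) :
    HasDerivAt (fun x' => f x' y) (p1 f x y) x :=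
  p1_eq_fderiv hf ▸ hasDerivAt_fderiv_fst hf

theorem uncurry_p1_eqOn (hf : ContDiffOn ℝ 1 (uncurry f) U) (hU : IsOpen U) :
    EqOn (uncurry (p1 f)) (fun q => fderiv ℝ (uncurry f) q (1, 0)) U := fun _ hq =>
  p1_eq_fderiv ((hf.contDiffAt (hU.mem_nhds hq)).differentiableAt one_ne_zero)

theorem uncurry_p2_eqOn (hf : ContDiffOn ℝ 1 (uncurry f) U) (hU : IsOpen U) :
    EqOn (uncurry (p2 f)) (fun q => fderiv ℝ (uncurry f) q (0, 1)) U := fun _ hq =>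
  p2_eq_fderiv ((hf.contDiffAt (hU.mem_nhds hq)).differentiableAt one_ne_zero)

theorem ContDiffOn.uncurry_p1 {m n : WithTop ℕ∞} (hf : ContDiffOn ℝ n (uncurry f) U)
    (hU : IsOpen U) (hmn : m + 1 ≤ n) : ContDiffOn ℝ m (uncurry (p1 f)) U :=
  ((hf.fderiv_of_isOpen hU hmn).clm_apply contDiffOn_const).congr
    (uncurry_p1_eqOn (hf.of_le (le_add_self.trans hmn)) hU)

theorem ContDiffOn.uncurry_p2 {m n : WithTop ℕ∞} (hf : ContDiffOn ℝ n (uncurry f) U)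
    (hU : IsOpen U) (hmn : m + 1 ≤ n) : ContDiffOn ℝ m (uncurry (p2 f)) U :=
  ((hf.fderiv_of_isOpen hU hmn).clm_apply contDiffOn_const).congr
    (uncurry_p2_eqOn (hf.of_le (le_add_self.trans hmn)) hU)

theorem uncurry_p2_eqOn_of_eqOn (hU : IsOpen U) (h : EqOn (uncurry f) (uncurry g) U) :
    EqOn (uncurry (p2 f)) (uncurry (p2 g)) U := by
  rintro ⟨x, y⟩ hq
  have hy : ∀ᶠ y' in 𝓝 y, (x, y') ∈ U :=
    (continuous_const.prodMk continuous_id).continuousAt.preimage_mem_nhds (hU.mem_nhds hq)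
  exact EventuallyEq.deriv_eq (hy.mono fun y' hy' => h hy')

theorem fderiv_fderiv_apply_of_eqOn {F G : ℝ × ℝ → ℝ} {v : ℝ × ℝ} (hU : IsOpen U)
    (h : EqOn G (fun q => fderiv ℝ F q v) U) {q : ℝ × ℝ} (hq : q ∈ U)
    (hF : DifferentiableAt ℝ (fderiv ℝ F) q) (w : ℝ × ℝ) :
    fderiv ℝ G q w = fderiv ℝ (fderiv ℝ F) q w v := by
  rw [(h.eventuallyEq_of_mem (hU.mem_nhds hq)).fderiv_eq,
    fderiv_clm_apply hF (differentiableAt_const v)]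
  simp

theorem p1_p2_eqOn_p2_p1 (hf : ContDiffOn ℝ 2 (uncurry f) U) (hU : IsOpen U) :
    EqOn (uncurry (p1 (p2 f))) (uncurry (p2 (p1 f))) U := by
  rintro ⟨x, y⟩ hq
  have hf2 : ContDiffAt ℝ 2 (uncurry f) (x, y) := hf.contDiffAt (hU.mem_nhds hq)
  have hdf : DifferentiableAt ℝ (fderiv ℝ (uncurry f)) (x, y) :=
    (hf2.fderiv_right le_rfl).differentiableAt one_ne_zero
  have hf1 : ContDiffOn ℝ 1 (uncurry f) U := hf.of_le one_le_two
  have h1 := (hf.uncurry_p1 hU (m := 1) (by norm_num)).contDiffAt (hU.mem_nhds hq)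
  have h2 := (hf.uncurry_p2 hU (m := 1) (by norm_num)).contDiffAt (hU.mem_nhds hq)
  simp only [uncurry_apply_pair]
  rw [p1_eq_fderiv (h2.differentiableAt one_ne_zero),
    p2_eq_fderiv (h1.differentiableAt one_ne_zero),
    fderiv_fderiv_apply_of_eqOn hU (uncurry_p2_eqOn hf1 hU) hq hdf,
    fderiv_fderiv_apply_of_eqOn hU (uncurry_p1_eqOn hf1 hU) hq hdf,
    hf2.isSymmSndFDerivAt (by simp)]

end PartialDerivatives

theorem p1_mul_add_mul_p1_eq_of_mul_sub_sq_eqOn {A B C : ℝ → ℝ → ℝ} {c : ℝ}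
    {U : Set (ℝ × ℝ)} (hU : IsOpen U)
    (hdet : ∀ q ∈ U, A q.1 q.2 * C q.1 q.2 - B q.1 q.2 ^ 2 = c) {x y : ℝ} (hq : (x, y) ∈ U)
    (hA : DifferentiableAt ℝ (uncurry A) (x, y)) (hB : DifferentiableAt ℝ (uncurry B) (x, y))
    (hC : DifferentiableAt ℝ (uncurry C) (x, y)) :
    p1 A x y * C x y + A x y * p1 C x y = 2 * B x y * p1 B x y := by
  have hx : ∀ᶠ x' in 𝓝 x, (x', y) ∈ U :=
    (continuous_id.prodMk continuous_const).continuousAt.preimage_mem_nhds (hU.mem_nhds hq)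
  have hconst : (fun x' => A x' y * C x' y - B x' y ^ 2) =ᶠ[𝓝 x] fun _ => c :=
    hx.mono fun x' hx' => hdet _ hx'
  have hderiv := ((hasDerivAt_p1 hA).mul (hasDerivAt_p1 hC)).sub ((hasDerivAt_p1 hB).pow 2)
  have hzero := hderiv.unique ((hasDerivAt_const x c).congr_of_eventuallyEq hconst)
  simp only [Nat.cast_ofNat] at hzero
  linear_combination hzero

theorem isOpen_Tri : IsOpen Tri :=
  (isOpen_lt continuous_const continuous_fst).inter
    ((isOpen_lt continuous_const continuous_snd).inter
      (isOpen_lt (continuous_fst.add continuous_snd) continuous_const))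

theorem hessian_det_const_implies_curl_free (σ : ℝ → ℝ → ℝ)
    (hσ : ContDiffOn ℝ 3 (fun p : ℝ × ℝ => σ p.1 p.2) Tri)
    (hdet : ∀ p ∈ Tri,
      p1 (p1 σ) p.1 p.2 * p2 (p2 σ) p.1 p.2 - (p2 (p1 σ) p.1 p.2) ^ 2 = π ^ 2) :
    ∀ p ∈ Tri,
      p1 (p1 (p1 σ)) p.1 p.2 * p2 (p2 σ) p.1 p.2
        + p1 (p1 σ) p.1 p.2 * p2 (p2 (p1 σ)) p.1 p.2
      = 2 * p2 (p1 σ) p.1 p.2 * p2 (p1 (p1 σ)) p.1 p.2 := by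
  rintro ⟨x, y⟩ hp
  have hσ : ContDiffOn ℝ 3 (uncurry σ) Tri := hσ
  have hσ₁ := hσ.uncurry_p1 isOpen_Tri (m := 2) (by norm_num)
  have hσ₂ := hσ.uncurry_p2 isOpen_Tri (m := 2) (by norm_num)
  have hdiff {g : ℝ → ℝ → ℝ} (hg : ContDiffOn ℝ 1 (uncurry g) Tri) :
      DifferentiableAt ℝ (uncurry g) (x, y) :=
    (hg.contDiffAt (isOpen_Tri.mem_nhds hp)).differentiableAt one_ne_zero
  have hσ₁₂₁ : p1 (p2 (p1 σ)) x y = p2 (p1 (p1 σ)) x y :=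
    p1_p2_eqOn_p2_p1 hσ₁ isOpen_Tri hp
  have hσ₂₂₁ : p1 (p2 (p2 σ)) x y = p2 (p2 (p1 σ)) x y :=
    (p1_p2_eqOn_p2_p1 hσ₂ isOpen_Tri hp).trans <| uncurry_p2_eqOn_of_eqOn isOpen_Tri
      (p1_p2_eqOn_p2_p1 (hσ.of_le (by norm_num)) isOpen_Tri) hp
  have key := p1_mul_add_mul_p1_eq_of_mul_sub_sq_eqOn isOpen_Tri hdet hp
    (hdiff (hσ₁.uncurry_p1 isOpen_Tri le_rfl)) (hdiff (hσ₁.uncurry_p2 isOpen_Tri le_rfl))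
    (hdiff (hσ₂.uncurry_p2 isOpen_Tri le_rfl))
  rwa [hσ₁₂₁, hσ₂₂₁] at key
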